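/- arXiv:2310.02176 — 9 statements merged into one kernel-verified Lean document; each statement's English description precedes it below -/
import Mathlib

section
/- Let θ be a real 2×2 matrix, P an invertible real 2×2 matrix with Pθ = θP, and δ ∈ ℝ². Define ψ : ℝ × ℝ² → ℝ × ℝ² by ψ(t, v) = (t, Pv + Λ^θ_t δ). Then ψ is a bijection and for all (t₁, v₁), (t₂, v₂) ∈ ℝ × ℝ² it holds that ψ((t₁, v₁) · (t₂, v₂)) = ψ(t₁, v₁) · ψ(t₂, v₂), i.e., ψ is an automorphism of the group G(θ). -/
open Matrix

/-- `Λ^B_t v := ∫₀ᵗ e^{sB} v ds`. -/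
noncomputable def Lam (B : Matrix (Fin 2) (Fin 2) ℝ) (t : ℝ) (v : Fin 2 → ℝ) : Fin 2 → ℝ :=
  ∫ s in (0:ℝ)..t, (NormedSpace.exp (s • B)) *ᵥ v

/-- The product of the group `G(θ) = ℝ ×_ρ ℝ²`:
`(t₁, v₁) · (t₂, v₂) = (t₁ + t₂, v₁ + e^{t₁θ} v₂)`. -/
noncomputable def Gmul (θ : Matrix (Fin 2) (Fin 2) ℝ) (p q : ℝ × (Fin 2 → ℝ)) :
    ℝ × (Fin 2 → ℝ) :=
  (p.1 + q.1, p.2 + (NormedSpace.exp (p.1 • θ)) *ᵥ q.2)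

/-! The cocycle identity `Λ_{t₁+t₂} = Λ_{t₁} + e^{t₁θ} Λ_{t₂}` (split the integral at `t₁` and
shift the second piece by `t₁`) makes the translation part `t ↦ Λ_t δ` of `ψ` compatible with the
product, and `P` commutes with every `e^{tθ}`, so `ψ` is a homomorphism; it is bijective because
it is an invertible affine map on each fibre `{t} × ℝ²`. -/

open NormedSpace

theorem Function.bijective_prod_fiberwise {α β γ : Type*} (g : α → β → γ)
    (hg : ∀ a, Function.Bijective (g a)) :
    Function.Bijective fun p : α × β => (p.1, g p.1 p.2) :=
  (Equiv.prodShear (Equiv.refl α) fun a => Equiv.ofBijective _ (hg a)).bijective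

section MatrixExp

variable {n : Type*} [Fintype n]

theorem Matrix.continuous_exp_smul [DecidableEq n] (A : Matrix n n ℝ) :
    Continuous fun s : ℝ => exp (s • A) := by
  let : NormedRing (Matrix n n ℝ) := Matrix.linftyOpNormedRing
  let : NormedAlgebra ℝ (Matrix n n ℝ) := Matrix.linftyOpNormedAlgebra
  let : NormedAlgebra ℚ (Matrix n n ℝ) := .restrictScalars ℚ ℝ _
  exact exp_continuous.comp (continuous_id.smul continuous_const)

theorem Matrix.exp_add_smul_mulVec [DecidableEq n] (A : Matrix n n ℝ) (s t : ℝ) (v : n → ℝ) :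
    exp ((s + t) • A) *ᵥ v = exp (s • A) *ᵥ (exp (t • A) *ᵥ v) := by
  rw [mulVec_mulVec, add_smul,
    Matrix.exp_add_of_commute _ _ (((Commute.refl A).smul_left s).smul_right t)]

theorem Matrix.intervalIntegral_mulVec (M : Matrix n n ℝ) {f : ℝ → n → ℝ} {a b : ℝ}
    (hf : IntervalIntegrable f MeasureTheory.volume a b) :
    ∫ s in a..b, M *ᵥ f s = M *ᵥ ∫ s in a..b, f s :=
  (LinearMap.toContinuousLinearMap M.mulVecLin).intervalIntegral_comp_comm hf

theorem Matrix.integral_exp_smul_mulVec_add [DecidableEq n] (A : Matrix n n ℝ) (v : n → ℝ)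
    (t₁ t₂ : ℝ) :
    ∫ s in (0:ℝ)..t₁ + t₂, exp (s • A) *ᵥ v =
      (∫ s in (0:ℝ)..t₁, exp (s • A) *ᵥ v) +
        exp (t₁ • A) *ᵥ ∫ s in (0:ℝ)..t₂, exp (s • A) *ᵥ v := by
  have hcont : Continuous fun s : ℝ => exp (s • A) *ᵥ v :=
    (continuous_exp_smul A).matrix_mulVec continuous_const
  have hshift : ∫ s in t₁..t₁ + t₂, exp (s • A) *ᵥ v =
      ∫ s in (0:ℝ)..t₂, exp ((t₁ + s) • A) *ᵥ v := by
    simpa using (intervalIntegral.integral_comp_add_left (fun s => exp (s • A) *ᵥ v) t₁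
      (a := 0) (b := t₂)).symm
  rw [← intervalIntegral.integral_add_adjacent_intervals (hcont.intervalIntegrable 0 t₁)
    (hcont.intervalIntegrable t₁ (t₁ + t₂)), hshift]
  simp_rw [exp_add_smul_mulVec]
  rw [intervalIntegral_mulVec _ (hcont.intervalIntegrable 0 t₂)]

end MatrixExp

theorem Lam_add (θ : Matrix (Fin 2) (Fin 2) ℝ) (δ : Fin 2 → ℝ) (t₁ t₂ : ℝ) :
    Lam θ (t₁ + t₂) δ = Lam θ t₁ δ + exp (t₁ • θ) *ᵥ Lam θ t₂ δ :=
  Matrix.integral_exp_smul_mulVec_add θ δ t₁ t₂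

/-- For `P` invertible commuting with `θ` and `δ ∈ ℝ²`, the map
`ψ(t, v) = (t, Pv + Λ^θ_t δ)` is an automorphism of `G(θ)`. -/
theorem psi_is_automorphism (θ P : Matrix (Fin 2) (Fin 2) ℝ) (hP : IsUnit P)
    (hcomm : P * θ = θ * P) (δ : Fin 2 → ℝ)
    (ψ : ℝ × (Fin 2 → ℝ) → ℝ × (Fin 2 → ℝ))
    (hψ : ∀ t v, ψ (t, v) = (t, P *ᵥ v + Lam θ t δ)) :
    Function.Bijective ψ ∧ ∀ p q : ℝ × (Fin 2 → ℝ), ψ (Gmul θ p q) = Gmul θ (ψ p) (ψ q) := by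
  refine ⟨?_, ?_⟩
  · have hPbij : Function.Bijective P.mulVec :=
      ⟨mulVec_injective_iff_isUnit.2 hP, mulVec_surjective_iff_isUnit.2 hP⟩
    rw [show ψ = fun p => (p.1, P *ᵥ p.2 + Lam θ p.1 δ) from funext fun p => hψ p.1 p.2]
    exact Function.bijective_prod_fiberwise _ fun t =>
      (Equiv.addRight (Lam θ t δ)).bijective.comp hPbij
  · rintro ⟨t₁, v₁⟩ ⟨t₂, v₂⟩
    have hPexp : P * exp (t₁ • θ) = exp (t₁ • θ) * P :=
      (Commute.smul_right hcomm t₁).exp_right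
    simp only [Gmul, hψ, Lam_add, mulVec_add, mulVec_mulVec, hPexp]
    congr 1
    abel
end

section
/- Let A be a real 2×2 matrix, ξ, η ∈ ℝ² and α ∈ ℝ, and define the linear endomorphism D of ℝ × ℝ² by D(a, w) := (0, aξ + Aw). Then the linear span of the set { Dⁿ(α, η) : n ∈ ℕ } (with D⁰ = identity) equals all of ℝ × ℝ² if and only if α · ⟨A(αξ + Aη), R(αξ + Aη)⟩ ≠ 0. (This is the ad-rank condition for the one-input linear control system determined by the linear vector field (A, ξ) and the left-invariant vector field (α, η).) -/
open Matrix

/-- The counterclockwise rotation by `π/2` on `ℝ²`. -/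
def Rot : Matrix (Fin 2) (Fin 2) ℝ := !![0, -1; 1, 0]

/-!
Writing `v = αξ + Aη`, the orbit consists of `(α, η)` and the vectors `(0, Aⁿv)`. By
Cayley–Hamilton the `Aⁿv` span the same subspace as `v` and `Av`. Since `(α, η)` is the only
orbit vector off the hyperplane `a = 0`, the orbit spans `ℝ × ℝ²` iff `α ≠ 0` and `v, Av` span
`ℝ²`, i.e. `det [v; Av] = ⟨Av, Rv⟩ ≠ 0`.
-/

section
variable {K E : Type*} [AddCommGroup E]

theorem Submodule.mem_span_singleton_sup_map_inr_iff [Ring K] [Module K E] {α : K} {η : E} {S : Submodule K E}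
    {a : K} {w : E} :
    (a, w) ∈ K ∙ (α, η) ⊔ S.map (LinearMap.inr K K E) ↔ ∃ c : K, c * α = a ∧ w - c • η ∈ S := by
  simp only [mem_sup, mem_span_singleton, mem_map, LinearMap.inr_apply]
  constructor
  · rintro ⟨_, ⟨c, rfl⟩, _, ⟨z, hz, rfl⟩, h⟩
    simp only [Prod.smul_mk, smul_eq_mul, Prod.mk_add_mk, add_zero, Prod.mk.injEq] at h
    exact ⟨c, h.1, by rw [← h.2, add_sub_cancel_left]; exact hz⟩
  · rintro ⟨c, rfl, hw⟩
    exact ⟨_, ⟨c, rfl⟩, _, ⟨_, hw, rfl⟩, by simp⟩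

theorem Submodule.span_insert_image_inr_eq_top_iff [Field K] [Module K E] (α : K) (η : E) (S : Set E) :
    span K (insert (α, η) (LinearMap.inr K K E '' S)) = ⊤ ↔ α ≠ 0 ∧ span K S = ⊤ := by
  simp only [span_insert, span_image, eq_top_iff', Prod.forall,
    mem_span_singleton_sup_map_inr_iff]
  constructor
  · intro h
    obtain ⟨c, hc, -⟩ := h 1 0
    have hα : α ≠ 0 := right_ne_zero_of_mul_eq_one hc
    refine ⟨hα, fun w => ?_⟩
    obtain ⟨c, hc, hw⟩ := h 0 w
    rw [(mul_eq_zero.1 hc).resolve_right hα, zero_smul, sub_zero] at hw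
    exact hw
  · rintro ⟨hα, hS⟩ a w
    exact ⟨a / α, div_mul_cancel₀ a hα, hS _⟩
end

section
variable {R : Type*} [CommRing R] (A : Matrix (Fin 2) (Fin 2) R)

theorem Matrix.mulVec_mulVec_self_fin_two (w : Fin 2 → R) :
    A *ᵥ (A *ᵥ w) = A.trace • (A *ᵥ w) - A.det • w := by
  ext i
  fin_cases i <;> simp [mulVec, dotProduct, Fin.sum_univ_two, trace_fin_two, det_fin_two] <;> ring

theorem Matrix.mulVec_mem_span_pair_fin_two (v : Fin 2 → R) {w : Fin 2 → R}
    (hw : w ∈ Submodule.span R {v, A *ᵥ v}) : A *ᵥ w ∈ Submodule.span R {v, A *ᵥ v} := by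
  induction hw using Submodule.span_induction with
  | mem x hx =>
    rcases hx with rfl | rfl
    · exact Submodule.subset_span (Set.mem_insert_of_mem _ rfl)
    · rw [mulVec_mulVec_self_fin_two]
      exact sub_mem
        (Submodule.smul_mem _ _ (Submodule.subset_span (Set.mem_insert_of_mem _ rfl)))
        (Submodule.smul_mem _ _ (Submodule.subset_span (Set.mem_insert _ _)))
  | zero => simp
  | add x y _ _ hx hy => rw [mulVec_add]; exact add_mem hx hy
  | smul c x _ hx => rw [mulVec_smul]; exact Submodule.smul_mem _ _ hx

theorem Matrix.span_range_pow_mulVec_fin_two (v : Fin 2 → R) :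
    Submodule.span R (Set.range fun n : ℕ => (A ^ n) *ᵥ v) = Submodule.span R {v, A *ᵥ v} := by
  refine le_antisymm (Submodule.span_le.2 ?_) (Submodule.span_mono ?_)
  · rintro _ ⟨n, rfl⟩
    induction n with
    | zero => exact Submodule.subset_span (by simp)
    | succ n ih =>
      simp only [SetLike.mem_coe, pow_succ', ← mulVec_mulVec] at ih ⊢
      exact mulVec_mem_span_pair_fin_two A v ih
  · rintro _ (rfl | rfl)
    exacts [⟨0, by simp⟩, ⟨1, by simp⟩]
end

theorem Matrix.span_pair_eq_top_iff_det_ne_zero {K : Type*} [Field K] (v w : Fin 2 → K) :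
    Submodule.span K {v, w} = ⊤ ↔ (of ![v, w]).det ≠ 0 := by
  have hrows : ({v, w} : Set (Fin 2 → K)) = Set.range (of ![v, w]).row :=
    (range_cons_cons_empty v w ![]).symm
  rw [hrows, ← range_vecMulLinear, LinearMap.range_eq_top, coe_vecMulLinear,
    vecMul_surjective_iff_isUnit, isUnit_iff_isUnit_det, isUnit_iff_ne_zero]

theorem dotProduct_rot_mulVec (u w : Fin 2 → ℝ) : u ⬝ᵥ (Rot *ᵥ w) = (of ![w, u]).det := by
  simp [Rot, dotProduct, mulVec, Fin.sum_univ_two, det_fin_two]; ring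

section
variable {R ι : Type*} [CommSemiring R] [Fintype ι] [DecidableEq ι] {A : Matrix ι ι R}
  {ξ : ι → R} {D : R × (ι → R) → R × (ι → R)}

theorem iterate_succ_eq_inr_pow_mulVec (hD : ∀ a w, D (a, w) = ((0 : R), a • ξ + A *ᵥ w))
    (α : R) (η : ι → R) (k : ℕ) :
    D^[k + 1] (α, η) = LinearMap.inr R R (ι → R) ((A ^ k) *ᵥ (α • ξ + A *ᵥ η)) := by
  induction k with
  | zero => simp [hD]
  | succ k ih =>
    rw [Function.iterate_succ_apply', ih, LinearMap.inr_apply, hD, zero_smul, zero_add, pow_succ',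
      ← mulVec_mulVec, LinearMap.inr_apply]

theorem setOf_iterate_eq_insert_image_inr (hD : ∀ a w, D (a, w) = ((0 : R), a • ξ + A *ᵥ w))
    (α : R) (η : ι → R) :
    {x | ∃ k : ℕ, D^[k] (α, η) = x} =
      insert (α, η)
        (LinearMap.inr R R (ι → R) '' Set.range fun k : ℕ => (A ^ k) *ᵥ (α • ξ + A *ᵥ η)) := by
  ext x
  simp only [Set.mem_ofPred_eq, Set.mem_insert_iff, Set.mem_image, Set.mem_range,
    exists_exists_eq_and]
  constructor
  · rintro ⟨_ | k, rfl⟩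
    exacts [Or.inl rfl, Or.inr ⟨k, (iterate_succ_eq_inr_pow_mulVec hD α η k).symm⟩]
  · rintro (rfl | ⟨k, rfl⟩)
    exacts [⟨0, rfl⟩, ⟨k + 1, iterate_succ_eq_inr_pow_mulVec hD α η k⟩]
end

/-- The ad-rank condition for the one-input linear control system determined by the
linear vector field `(A, ξ)` and the left-invariant vector field `(α, η)`: the span of
the orbit of `(α, η)` under the derivation `D(a, w) = (0, aξ + Aw)` is everything iff
`α⟨A(αξ + Aη), R(αξ + Aη)⟩ ≠ 0`. -/
theorem adrank_condition (A : Matrix (Fin 2) (Fin 2) ℝ) (ξ η : Fin 2 → ℝ) (α : ℝ)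
    (D : ℝ × (Fin 2 → ℝ) → ℝ × (Fin 2 → ℝ))
    (hD : ∀ a w, D (a, w) = ((0 : ℝ), a • ξ + A *ᵥ w)) :
    Submodule.span ℝ {x : ℝ × (Fin 2 → ℝ) | ∃ n : ℕ, D^[n] (α, η) = x} = ⊤ ↔
      α * ((A *ᵥ (α • ξ + A *ᵥ η)) ⬝ᵥ (Rot *ᵥ (α • ξ + A *ᵥ η))) ≠ 0 := by
  rw [setOf_iterate_eq_insert_image_inr hD, Submodule.span_insert_image_inr_eq_top_iff,
    span_range_pow_mulVec_fin_two, span_pair_eq_top_iff_det_ne_zero, dotProduct_rot_mulVec,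
    mul_ne_zero_iff]
end

section
/- Let A and θ be real 2×2 matrices with Aθ = θA, η ∈ ℝ², and u₀ ∈ ℝ such that A − u₀θ is invertible, and set v₀ := −u₀ (A − u₀θ)⁻¹ η. Then η = θ v₀ if and only if Aη = 0. In particular, if in addition det A ≠ 0 and η ≠ 0, then −(A − u₀θ)⁻¹(η − θ v₀) ≠ 0, i.e., the equilibrium curve u ↦ −u(A − uθ)⁻¹η is regular at u₀. -/
/-!
Since `θ` commutes with `A − uθ`, it commutes with `(A − uθ)⁻¹`, and writing `A = (A − uθ) + uθ` gives
`η − θv₀ = (A − uθ)⁻¹Aη`. Both claims follow because `(A − uθ)⁻¹` and (when `det A ≠ 0`) `A`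
have trivial kernel.
-/

open Matrix

namespace Matrix

variable {n R : Type*} [Fintype n] [DecidableEq n] [CommRing R]

theorem commute_nonsing_inv_right {A B : Matrix n n R} (h : Commute A B) (hB : IsUnit B) :
    Commute A B⁻¹ := by
  simpa only [coe_units_inv, IsUnit.unit_spec] using h.units_inv_right (u := hB.unit)

theorem nonsing_inv_mulVec_eq_zero_iff {B : Matrix n n R} (hB : IsUnit B) {x : n → R} :
    B⁻¹ *ᵥ x = 0 ↔ x = 0 := by
  refine ⟨fun h ↦ ?_, fun h ↦ by rw [h, mulVec_zero]⟩
  have hdet := (isUnit_iff_isUnit_det B).mp hB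
  simpa [mulVec_mulVec, mul_nonsing_inv _ hdet] using congrArg (B *ᵥ ·) h

/-- The equilibrium of `v̇ = (A − uθ)v + uη`. -/
noncomputable def equilibrium (A θ : Matrix n n R) (η : n → R) (u : R) : n → R :=
  (-u) • ((A - u • θ)⁻¹ *ᵥ η)

variable {A θ : Matrix n n R} {u : R}

theorem sub_mulVec_equilibrium (hcomm : Commute A θ) (hu : IsUnit (A - u • θ)) (η : n → R) :
    η - θ *ᵥ equilibrium A θ η u = (A - u • θ)⁻¹ *ᵥ (A *ᵥ η) := by
  set B := A - u • θ
  have hθB : Commute θ B⁻¹ :=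
    commute_nonsing_inv_right (hcomm.symm.sub_right ((Commute.refl θ).smul_right u)) hu
  have hBA : B⁻¹ * A = 1 + u • (θ * B⁻¹) := calc
    B⁻¹ * A = B⁻¹ * (B + u • θ) := by rw [sub_add_cancel]
    _ = 1 + u • (θ * B⁻¹) := by
      rw [Matrix.mul_add, nonsing_inv_mul B ((isUnit_iff_isUnit_det B).mp hu), Matrix.mul_smul,
        hθB.eq]
  rw [mulVec_mulVec, hBA, add_mulVec, one_mulVec, smul_mulVec, equilibrium, mulVec_smul,
    mulVec_mulVec]
  module

theorem eq_mulVec_equilibrium_iff (hcomm : Commute A θ) (hu : IsUnit (A - u • θ)) (η : n → R) :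
    η = θ *ᵥ equilibrium A θ η u ↔ A *ᵥ η = 0 := by
  rw [← sub_eq_zero, sub_mulVec_equilibrium hcomm hu, nonsing_inv_mulVec_eq_zero_iff hu]

theorem nonsing_inv_mulVec_sub_mulVec_equilibrium_ne_zero [IsDomain R] (hcomm : Commute A θ)
    (hu : IsUnit (A - u • θ)) (hA : A.det ≠ 0) {η : n → R} (hη : η ≠ 0) :
    (A - u • θ)⁻¹ *ᵥ (η - θ *ᵥ equilibrium A θ η u) ≠ 0 := by
  rw [ne_eq, nonsing_inv_mulVec_eq_zero_iff hu, sub_eq_zero, eq_mulVec_equilibrium_iff hcomm hu]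
  exact fun h ↦ hη (eq_zero_of_mulVec_eq_zero hA h)

end Matrix

/-- Let `Aθ = θA`, `A − u₀θ` invertible, and `v₀ = −u₀(A − u₀θ)⁻¹η` the equilibrium of
`v̇ = (A − u₀θ)v + u₀η`. Then `η = θv₀ ↔ Aη = 0`; in particular, if `det A ≠ 0` and
`η ≠ 0` then the equilibrium curve is regular at `u₀`:
`−(A − u₀θ)⁻¹(η − θv₀) ≠ 0`. -/
theorem equilibrium_curve_regular (A θ : Matrix (Fin 2) (Fin 2) ℝ)
    (hcomm : A * θ = θ * A) (η : Fin 2 → ℝ) (u₀ : ℝ) (hu : IsUnit (A - u₀ • θ))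
    (v₀ : Fin 2 → ℝ) (hv₀ : v₀ = (-u₀) • ((A - u₀ • θ)⁻¹ *ᵥ η)) :
    (η = θ *ᵥ v₀ ↔ A *ᵥ η = 0) ∧
    (A.det ≠ 0 → η ≠ 0 → -((A - u₀ • θ)⁻¹ *ᵥ (η - θ *ᵥ v₀)) ≠ 0) := by
  have hv₀ : v₀ = equilibrium A θ η u₀ := hv₀
  subst hv₀
  exact ⟨eq_mulVec_equilibrium_iff hcomm hu η, fun hA hη ↦
    neg_ne_zero.mpr (nonsing_inv_mulVec_sub_mulVec_equilibrium_ne_zero hcomm hu hA hη)⟩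
end

section
/- Let A be a real 2×2 matrix with det A ≠ 0. Then there exists δ > 0 such that det(I − e^{sA}) ≠ 0 for all s ∈ (0, δ), where I is the 2×2 identity matrix. -/
/-!
Since `d/ds exp (s • A) = A` at `s = 0`, the slope `s⁻¹ • (exp (s • A) - 1)` tends to `A`, so its
determinant is eventually nonzero. For `s ≠ 0`, `det (1 - exp (s • A))` is that determinant
times `(-s) ^ n`.
-/

open Filter Topology Matrix

theorem tendsto_inv_smul_exp_smul_sub_one {𝕂 𝔸 : Type*} [RCLike 𝕂] [NormedRing 𝔸]
    [NormedAlgebra 𝕂 𝔸] [CompleteSpace 𝔸] (x : 𝔸) :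
    Tendsto (fun t : 𝕂 => t⁻¹ • (NormedSpace.exp (t • x) - 1)) (𝓝[≠] 0) (𝓝 x) := by
  simpa using (hasDerivAt_exp_smul_const (𝕂 := 𝕂) x 0).tendsto_slope_zero

theorem Matrix.eventually_det_one_sub_exp_smul_ne_zero {n 𝕂 : Type*} [Fintype n]
    [DecidableEq n] [RCLike 𝕂] {A : Matrix n n 𝕂} (hA : A.det ≠ 0) :
    ∀ᶠ t in 𝓝[≠] (0 : 𝕂), (1 - NormedSpace.exp (t • A)).det ≠ 0 := by
  -- Any algebra norm will do: it induces the product topology, on which `exp` and `det` depend.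
  let := Matrix.linftyOpNormedRing (n := n) (α := 𝕂)
  let := Matrix.linftyOpNormedAlgebra (n := n) (R := 𝕂) (α := 𝕂)
  -- Instance search does not see through this uniformity to the product one.
  have : @CompleteSpace (Matrix n n 𝕂) PseudoMetricSpace.toUniformSpace :=
    FiniteDimensional.complete 𝕂 _
  have hslope : ∀ᶠ t in 𝓝[≠] (0 : 𝕂), (t⁻¹ • (NormedSpace.exp (t • A) - 1)).det ≠ 0 :=
    ((continuous_id.matrix_det.tendsto A).comp
      (tendsto_inv_smul_exp_smul_sub_one A)).eventually_ne hA
  filter_upwards [hslope, self_mem_nhdsWithin] with t ht (ht0 : t ≠ 0)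
  have hfactor :
      1 - NormedSpace.exp (t • A) = (-t) • (t⁻¹ • (NormedSpace.exp (t • A) - 1)) := by
    rw [smul_smul, neg_mul, mul_inv_cancel₀ ht0, neg_smul, one_smul, neg_sub]
  rw [hfactor, det_smul]
  exact mul_ne_zero (pow_ne_zero _ (neg_ne_zero.2 ht0)) ht

/-- If `det A ≠ 0`, then there exists `δ > 0` with `det(I − e^{sA}) ≠ 0` for all
`s ∈ (0, δ)`. -/
theorem det_one_sub_exp_ne_zero (A : Matrix (Fin 2) (Fin 2) ℝ) (hA : A.det ≠ 0) :
    ∃ δ > (0 : ℝ), ∀ s ∈ Set.Ioo (0 : ℝ) δ, ((1 : Matrix (Fin 2) (Fin 2) ℝ)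
      - NormedSpace.exp (s • A)).det ≠ 0 := by
  have hright := (eventually_det_one_sub_exp_smul_ne_zero hA).filter_mono (nhdsGT_le_nhdsNE 0)
  obtain ⟨δ, hδ, hsub⟩ := mem_nhdsGT_iff_exists_Ioo_subset.1 hright
  exact ⟨δ, hδ, fun s hs => hsub hs⟩
end

section
/- Let A be a nonzero real 2×2 matrix and s₀ ≠ 0 a real number such that e^{s₀A} = I, the identity matrix. Then trace A = 0 and det A > 0 (equivalently, A has a pair of nonzero purely imaginary eigenvalues). -/
/-!
Every eigenvalue `μ ∈ ℂ` of `B = s₀A` satisfies `e^μ = 1`, because `exp` maps the spectrum of `B`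
into the spectrum of `exp B = 1`; hence `μ ∈ 2πiℤ`. The two eigenvalues `μ` and `tr B - μ` of the
real matrix `B` thus lie in `2πiℤ`, so the real number `tr B` is zero and `det B = -μ² = (2πk)²`.
If `k = 0`, then `B² = 0` by Cayley–Hamilton, so `1 = exp B = 1 + B` forces `B = 0`.
-/

open Matrix Polynomial NormedSpace

theorem NormedSpace.exp_eq_one_of_mem_spectrum {𝕜 A : Type*} [RCLike 𝕜] [NormedRing A]
    [NormedAlgebra 𝕜 A] [CompleteSpace A] [Nontrivial A] {a : A} (ha : exp a = 1) {z : 𝕜}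
    (hz : z ∈ spectrum 𝕜 a) : exp z = 1 := by
  simpa [ha, spectrum.one_eq] using spectrum.exp_mem_exp a hz

theorem NormedSpace.exp_eq_one_add_of_sq_eq_zero {𝔸 : Type*} [Ring 𝔸] [Algebra ℚ 𝔸]
    [TopologicalSpace 𝔸] [IsTopologicalRing 𝔸] [T2Space 𝔸] {x : 𝔸} (hx : x ^ 2 = 0) :
    exp x = 1 + x := by
  rw [exp_eq_tsum_rat]
  dsimp only
  rw [tsum_eq_sum (s := Finset.range 2)]
  · simp [Finset.sum_range_succ]
  · intro n hn
    simp [pow_eq_zero_of_le (by simp at hn; omega : 2 ≤ n) hx]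

namespace Matrix

theorem sq_eq_trace_smul_sub_det_smul_one {R : Type*} [CommRing R] [Nontrivial R]
    (M : Matrix (Fin 2) (Fin 2) R) : M ^ 2 = M.trace • M - M.det • 1 := by
  have h := M.aeval_self_charpoly
  simp only [charpoly_fin_two, map_add, map_sub, map_mul, map_pow, aeval_X, aeval_C,
    Algebra.algebraMap_eq_smul_one, smul_mul_assoc, one_mul] at h
  rw [← sub_eq_zero, ← h]
  abel

variable {n : Type*} [Fintype n] [DecidableEq n]

open scoped Norms.Operator in
theorem exp_map_ofReal (B : Matrix n n ℝ) :
    exp (B.map Complex.ofReal) = (exp B).map Complex.ofReal :=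
  (map_exp (Complex.ofRealHom.mapMatrix : Matrix n n ℝ →+* Matrix n n ℂ)
    (continuous_id.matrix_map Complex.continuous_ofReal) B).symm

open scoped Norms.Operator in
theorem cexp_eq_one_of_aeval_charpoly_eq_zero [Nonempty n] {B : Matrix n n ℝ} (hB : exp B = 1)
    {μ : ℂ} (hμ : aeval μ B.charpoly = 0) : Complex.exp μ = 1 := by
  have hM : exp (B.map Complex.ofReal) = 1 := by
    rw [exp_map_ofReal, hB, Matrix.map_one _ Complex.ofReal_zero Complex.ofReal_one]
  have hμM : μ ∈ spectrum ℂ (B.map Complex.ofReal) := by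
    rw [mem_spectrum_iff_isRoot_charpoly, IsRoot]
    change eval μ (B.map Complex.ofRealHom).charpoly = 0
    rwa [charpoly_map, eval_map]
  rw [Complex.exp_eq_exp_ℂ]
  exact exp_eq_one_of_mem_spectrum hM hμM

theorem trace_eq_zero_and_exists_det_eq_of_exp_eq_one {B : Matrix (Fin 2) (Fin 2) ℝ}
    (hB : exp B = 1) : B.trace = 0 ∧ ∃ k : ℤ, B.det = (2 * Real.pi * k) ^ 2 := by
  have hroot : ∀ μ : ℂ, aeval μ B.charpoly = 0 ↔ μ ^ 2 - B.trace * μ + B.det = 0 := by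
    simp [charpoly_fin_two]
  obtain ⟨μ, hμ⟩ :=
    IsAlgClosed.exists_aeval_eq_zero ℂ B.charpoly (by simp [charpoly_degree_eq_dim])
  have hμ' : aeval (B.trace - μ) B.charpoly = 0 := by
    rw [hroot] at hμ ⊢
    linear_combination hμ
  obtain ⟨k, hk⟩ := Complex.exp_eq_one_iff.1 (cexp_eq_one_of_aeval_charpoly_eq_zero hB hμ)
  obtain ⟨m, hm⟩ := Complex.exp_eq_one_iff.1 (cexp_eq_one_of_aeval_charpoly_eq_zero hB hμ')
  have ht : B.trace = 0 := by
    simpa [hk] using congrArg Complex.re (eq_add_of_sub_eq hm)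
  refine ⟨ht, k, ?_⟩
  rw [hroot, ht, hk] at hμ
  have hd : ((B.det : ℝ) : ℂ) = ((2 * Real.pi * k) ^ 2 : ℝ) := by
    push_cast at hμ ⊢
    linear_combination hμ - (2 * Real.pi * k) ^ 2 * Complex.I_sq
  exact_mod_cast hd

theorem det_pos_of_exp_eq_one {B : Matrix (Fin 2) (Fin 2) ℝ} (hB₀ : B ≠ 0) (hB : exp B = 1) :
    0 < B.det := by
  obtain ⟨ht, k, hd⟩ := trace_eq_zero_and_exists_det_eq_of_exp_eq_one hB
  have hk : k ≠ 0 := by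
    rintro rfl
    have hsq : B ^ 2 = 0 := by
      simpa [ht, hd] using sq_eq_trace_smul_sub_det_smul_one B
    have h := exp_eq_one_add_of_sq_eq_zero hsq
    rw [hB, left_eq_add] at h
    exact hB₀ h
  rw [hd]
  positivity

end Matrix

/-- If `A ≠ 0` and `e^{s₀A} = I` for some `s₀ ≠ 0`, then `trace A = 0` and `det A > 0`
(that is, `A` has a pair of nonzero purely imaginary eigenvalues). -/
theorem trace_eq_zero_det_pos_of_exp_eq_one (A : Matrix (Fin 2) (Fin 2) ℝ)
    (hA : A ≠ 0) (s₀ : ℝ) (hs₀ : s₀ ≠ 0)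
    (hexp : NormedSpace.exp (s₀ • A) = 1) :
    A.trace = 0 ∧ 0 < A.det := by
  have ht := (trace_eq_zero_and_exists_det_eq_of_exp_eq_one hexp).1
  have hd := det_pos_of_exp_eq_one (smul_ne_zero hs₀ hA) hexp
  rw [trace_smul, smul_eq_mul, mul_eq_zero] at ht
  rw [det_smul, Fintype.card_fin] at hd
  exact ⟨ht.resolve_left hs₀, pos_of_mul_pos_right hd (sq_nonneg s₀)⟩
end

section
/- Let A and θ be real 2×2 matrices with Aθ = θA and rank A = 1. Then for every ξ ∈ ℝ², if ⟨Aξ, Rξ⟩ = 0 then ⟨θξ, Rξ⟩ = 0. (Consequently, for a nilrank-one linear control system, ⟨Aξ, Rξ⟩² + ⟨θξ, Rξ⟩² ≠ 0 if and only if ⟨Aξ, Rξ⟩ ≠ 0; i.e., the Lie algebra rank condition is equivalent to the ad-rank condition.) -/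
/-!
A rank-one `2 × 2` matrix is not scalar, and the centralizer of a non-scalar `2 × 2` matrix `A`
is spanned by `1` and `A`; hence `θ = α • 1 + β • A`. Since `R` is skew, `⟨ξ, Rξ⟩ = 0`, so
`⟨θξ, Rξ⟩ = β ⟨Aξ, Rξ⟩`.
-/

open Matrix

namespace Matrix

variable {K : Type*} [Field K]

theorem eq_smul_one_add_smul_of_offDiag_eq {A θ : Matrix (Fin 2) (Fin 2) K} {β : K}
    (h01 : θ 0 1 = β * A 0 1) (h10 : θ 1 0 = β * A 1 0)
    (hdiag : θ 0 0 - θ 1 1 = β * (A 0 0 - A 1 1)) :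
    θ = (θ 0 0 - β * A 0 0) • 1 + β • A := by
  ext i j
  fin_cases i <;> fin_cases j <;> simp [h01, h10]
  linear_combination -hdiag

theorem exists_eq_smul_one_add_smul_of_commute {A θ : Matrix (Fin 2) (Fin 2) K}
    (hcomm : A * θ = θ * A) (hA : ∀ α : K, A ≠ α • 1) :
    ∃ α β : K, θ = α • 1 + β • A := by
  have h00 := congrFun (congrFun hcomm 0) 0
  have h01 := congrFun (congrFun hcomm 0) 1
  have h10 := congrFun (congrFun hcomm 1) 0
  simp only [mul_apply, Fin.sum_univ_two] at h00 h01 h10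
  have hA' : A 0 1 ≠ 0 ∨ A 1 0 ≠ 0 ∨ A 0 0 - A 1 1 ≠ 0 := by
    by_contra! h
    refine hA (A 0 0) ?_
    ext i j
    fin_cases i <;> fin_cases j <;> simp [h.1, h.2.1, sub_eq_zero.mp h.2.2]
  rcases hA' with hb | hc | had
  · refine ⟨_, _, eq_smul_one_add_smul_of_offDiag_eq (β := θ 0 1 / A 0 1) ?_ ?_ ?_⟩
    · field_simp
    · field_simp; linear_combination h00
    · field_simp; linear_combination -h01
  · refine ⟨_, _, eq_smul_one_add_smul_of_offDiag_eq (β := θ 1 0 / A 1 0) ?_ ?_ ?_⟩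
    · field_simp; linear_combination -h00
    · field_simp
    · field_simp; linear_combination h10
  · refine ⟨_, _, eq_smul_one_add_smul_of_offDiag_eq
      (β := (θ 0 0 - θ 1 1) / (A 0 0 - A 1 1)) ?_ ?_ ?_⟩
    · field_simp; linear_combination h01
    · field_simp; linear_combination -h10
    · field_simp

theorem rank_smul_one_ne_one {n : Type*} [Fintype n] [DecidableEq n]
    (hn : Fintype.card n ≠ 1) (α : K) : (α • (1 : Matrix n n K)).rank ≠ 1 := by
  rcases eq_or_ne α 0 with rfl | hα
  · simp
  · rwa [rank_smul_of_mem_nonZeroDivisors _ (mem_nonZeroDivisors_of_ne_zero hα), rank_one]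

end Matrix

theorem dotProduct_rot_mulVec_self (ξ : Fin 2 → ℝ) : ξ ⬝ᵥ (Rot *ᵥ ξ) = 0 := by
  simp [Rot, dotProduct, Fin.sum_univ_two, mul_comm]

/-- If `Aθ = θA` and `rank A = 1`, then for every `ξ`, `⟨Aξ, Rξ⟩ = 0` implies
`⟨θξ, Rξ⟩ = 0`. Consequently, for a nilrank-one linear control system the Lie algebra
rank condition is equivalent to the ad-rank condition. -/
theorem larc_eq_adrank_of_rank_one (A θ : Matrix (Fin 2) (Fin 2) ℝ)
    (hcomm : A * θ = θ * A) (hrank : A.rank = 1) :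
    ∀ ξ : Fin 2 → ℝ, (A *ᵥ ξ) ⬝ᵥ (Rot *ᵥ ξ) = 0 → (θ *ᵥ ξ) ⬝ᵥ (Rot *ᵥ ξ) = 0 := by
  intro ξ hAξ
  obtain ⟨α, β, rfl⟩ := exists_eq_smul_one_add_smul_of_commute hcomm
    fun α hα => rank_smul_one_ne_one (by simp) α (hα ▸ hrank)
  rw [add_mulVec, add_dotProduct, smul_mulVec, smul_mulVec, one_mulVec, smul_dotProduct,
    smul_dotProduct, hAξ, dotProduct_rot_mulVec_self, smul_zero, smul_zero, add_zero]
end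

section
/- Let γ ∈ ℝ with |γ| ≤ 1 and let θ be the real 2×2 diagonal matrix with diagonal entries 1 and γ. For every ξ ∈ ℝ² with ⟨θξ, Rξ⟩ ≠ 0, there exists ξ̂ ∈ ℝ² such that ⟨Λ^θ_t ξ, ξ̂⟩ ≥ 0 for all t ∈ ℝ. -/
open Matrix

/-!
For `θ = diag(1, γ)` the flow is `e^{sθ} ξ = (e^s ξ₀, e^{γs} ξ₁)`, so `Λ^θ_t ξ` has components
`(∫₀ᵗ e^s) ξ₀` and `(∫₀ᵗ e^{γs}) ξ₁`. The hypothesis `⟨θξ, Rξ⟩ = (γ - 1) ξ₀ ξ₁ ≠ 0` makes both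
components of `ξ` nonzero, and pairing with `ξ̂ = (ξ₀⁻¹, -ξ₁⁻¹)` leaves `∫₀ᵗ (e^s - e^{γs}) ds`.
Since `γ ≤ 1`, this integrand has the sign of `s`, so the integral is nonnegative for every `t`.
-/

theorem exp_smul_diagonal {n : Type*} [Fintype n] [DecidableEq n] (d : n → ℝ) (s : ℝ) :
    NormedSpace.exp (s • diagonal d) = diagonal fun i => Real.exp (s * d i) := by
  rw [← diagonal_smul, exp_diagonal]
  congr 1
  ext i
  simp only [Pi.coe_exp, Pi.smul_apply, smul_eq_mul, Real.exp_eq_exp_ℝ]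

theorem Lam_diagonal_apply (d : Fin 2 → ℝ) (t : ℝ) (v : Fin 2 → ℝ) (i : Fin 2) :
    Lam (diagonal d) t v i = (∫ s in (0:ℝ)..t, Real.exp (s * d i)) * v i := by
  have hcont : Continuous fun s : ℝ => fun j => Real.exp (s * d j) * v j := by fun_prop
  calc Lam (diagonal d) t v i
      = (∫ s in (0:ℝ)..t, fun j => Real.exp (s * d j) * v j) i := by
        simp only [Lam, exp_smul_diagonal]
        congr! with s j
        exact mulVec_diagonal _ _ _
    _ = ∫ s in (0:ℝ)..t, Real.exp (s * d i) * v i :=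
        ((ContinuousLinearMap.proj (R := ℝ) (φ := fun _ : Fin 2 => ℝ) i).intervalIntegral_comp_comm
          (hcont.intervalIntegrable 0 t)).symm
    _ = _ := intervalIntegral.integral_mul_const _ _

theorem intervalIntegral_nonneg_of_sign {f : ℝ → ℝ} (hpos : ∀ s, 0 ≤ s → 0 ≤ f s)
    (hneg : ∀ s ≤ 0, f s ≤ 0) (t : ℝ) : 0 ≤ ∫ s in (0:ℝ)..t, f s := by
  rcases le_total 0 t with ht | ht
  · exact intervalIntegral.integral_nonneg ht fun s hs => hpos s hs.1
  · rw [intervalIntegral.integral_symm, ← intervalIntegral.integral_neg]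
    exact intervalIntegral.integral_nonneg ht fun s hs => neg_nonneg.2 (hneg s hs.2)

theorem intervalIntegral_exp_mul_le {a b : ℝ} (hab : a ≤ b) (t : ℝ) :
    ∫ s in (0:ℝ)..t, Real.exp (s * a) ≤ ∫ s in (0:ℝ)..t, Real.exp (s * b) := by
  have hint (c : ℝ) : IntervalIntegrable (fun s => Real.exp (s * c)) MeasureTheory.volume 0 t :=
    (by fun_prop : Continuous fun s => Real.exp (s * c)).intervalIntegrable 0 t
  rw [← sub_nonneg, ← intervalIntegral.integral_sub (hint b) (hint a)]
  refine intervalIntegral_nonneg_of_sign (fun s hs => ?_) (fun s hs => ?_) t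
  · exact sub_nonneg.2 (Real.exp_le_exp.2 (mul_le_mul_of_nonneg_left hab hs))
  · exact sub_nonpos.2 (Real.exp_le_exp.2 (mul_le_mul_of_nonpos_left hab hs))

theorem diagonal_mulVec_dotProduct_rot_mulVec (d v : Fin 2 → ℝ) :
    (diagonal d *ᵥ v) ⬝ᵥ (Rot *ᵥ v) = (d 1 - d 0) * (v 0 * v 1) := by
  rw [vec2_dotProduct, Rot, diagonal_fin_two]
  simp only [mulVec_fin_two, of_apply, cons_val', cons_val_zero, cons_val_one, empty_val',
    cons_val_fin_one]
  ring

/-- For `θ = diag(1, γ)` with `|γ| ≤ 1` and any `ξ` with `⟨θξ, Rξ⟩ ≠ 0`, there is a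
vector `ξ̂` such that `⟨Λ^θ_t ξ, ξ̂⟩ ≥ 0` for all `t`. -/
theorem exists_nonneg_pairing_diagonal (γ : ℝ) (hγ : |γ| ≤ 1)
    (θ : Matrix (Fin 2) (Fin 2) ℝ) (hθ : θ = !![1, 0; 0, γ])
    (ξ : Fin 2 → ℝ) (hξ : (θ *ᵥ ξ) ⬝ᵥ (Rot *ᵥ ξ) ≠ 0) :
    ∃ ξhat : Fin 2 → ℝ, ∀ t : ℝ, 0 ≤ (Lam θ t ξ) ⬝ᵥ ξhat := by
  replace hθ : θ = diagonal ![1, γ] := by rw [hθ, diagonal_fin_two]; rfl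
  subst hθ
  rw [diagonal_mulVec_dotProduct_rot_mulVec] at hξ
  obtain ⟨hξ0, hξ1⟩ := mul_ne_zero_iff.1 (right_ne_zero_of_mul hξ)
  refine ⟨![(ξ 0)⁻¹, -(ξ 1)⁻¹], fun t => ?_⟩
  have hpair : Lam (diagonal ![1, γ]) t ξ ⬝ᵥ ![(ξ 0)⁻¹, -(ξ 1)⁻¹]
      = (∫ s in (0:ℝ)..t, Real.exp (s * 1)) - ∫ s in (0:ℝ)..t, Real.exp (s * γ) := by
    simp only [vec2_dotProduct, Lam_diagonal_apply, cons_val_zero, cons_val_one, cons_val_fin_one]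
    rw [mul_neg, mul_inv_cancel_right₀ hξ0, mul_inv_cancel_right₀ hξ1, ← sub_eq_add_neg]
  rw [hpair, sub_nonneg]
  exact intervalIntegral_exp_mul_le (abs_le.1 hγ).2 t
end

section
/- Let θ be an invertible real 2×2 matrix, ξ ∈ ℝ², t₀ ∈ ℝ, v₀ ∈ ℝ², and u, α ∈ ℝ with uα ≠ 0. Define c : ℝ → ℝ² by c(s) := (1/(uα)) e^{t₀θ} (e^{uαsθ} − uαs·θ − I) θ⁻² ξ + s·Λ^θ_{t₀} ξ + v₀. Then c(0) = v₀ and for every s ∈ ℝ, c is differentiable at s with derivative c'(s) = Λ^θ_{t₀ + uαs} ξ. (Hence c is the second component of the solution of the nilrank-zero linear control system ṫ = uα, v̇ = Λ^θ_t ξ with constant control u starting at (t₀, v₀).) -/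
open Matrix

/-!
Since `θ` is invertible, `r ↦ (e^{rθ} - I) θ⁻¹ ξ` is an antiderivative of `r ↦ e^{rθ} ξ`, so
`Λ^θ_r ξ = (e^{rθ} - I) θ⁻¹ ξ`, and this is in turn the derivative of
`r ↦ (e^{rθ} - rθ - I) θ⁻² ξ`. The chain rule gives `c'(s) = e^{t₀θ} Λ^θ_{uαs} ξ + Λ^θ_{t₀} ξ`,
which equals `Λ^θ_{t₀+uαs} ξ` because `e^{(t₀+r)θ} = e^{t₀θ} e^{rθ}`.
-/

-- Any submultiplicative norm would do; it only serves to make `exp` differentiable.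
attribute [local instance] Matrix.linftyOpNormedRing Matrix.linftyOpNormedAlgebra

section

variable {n : Type*} [Fintype n]

theorem HasDerivAt.const_mulVec {f : ℝ → n → ℝ} {f' : n → ℝ} {x : ℝ}
    (hf : HasDerivAt f f' x) (A : Matrix n n ℝ) : HasDerivAt (fun r => A *ᵥ f r) (A *ᵥ f') x :=
  ((LinearMap.toContinuousLinearMap (mulVecLin A)).hasFDerivAt.comp_hasDerivAt x hf :)

variable [DecidableEq n]

theorem HasDerivAt.mulVec_const {f : ℝ → Matrix n n ℝ} {f' : Matrix n n ℝ} {x : ℝ}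
    (hf : HasDerivAt f f' x) (w : n → ℝ) : HasDerivAt (fun r => f r *ᵥ w) (f' *ᵥ w) x :=
  ((LinearMap.toContinuousLinearMap ((mulVecBilin ℝ ℝ).flip w)).hasFDerivAt.comp_hasDerivAt x hf :)

theorem hasDerivAt_exp_smul_sub_one_mulVec_inv {B : Matrix n n ℝ} (hB : IsUnit B)
    (v : n → ℝ) (r : ℝ) :
    HasDerivAt (fun r : ℝ => (NormedSpace.exp (r • B) - 1) *ᵥ (B⁻¹ *ᵥ v))
      (NormedSpace.exp (r • B) *ᵥ v) r := by
  have h := ((hasDerivAt_exp_smul_const B r).sub_const 1).mulVec_const (B⁻¹ *ᵥ v)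
  rwa [mulVec_mulVec, mul_assoc, mul_nonsing_inv B ((isUnit_iff_isUnit_det B).mp hB),
    mul_one] at h

theorem integral_exp_smul_mulVec {B : Matrix n n ℝ} (hB : IsUnit B) (v : n → ℝ) (t : ℝ) :
    ∫ s in (0:ℝ)..t, NormedSpace.exp (s • B) *ᵥ v =
      (NormedSpace.exp (t • B) - 1) *ᵥ (B⁻¹ *ᵥ v) := by
  have hcont : Continuous fun s : ℝ => NormedSpace.exp (s • B) *ᵥ v :=
    (NormedSpace.exp_continuous.comp (continuous_id.smul continuous_const)).matrix_mulVec
      continuous_const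
  rw [intervalIntegral.integral_eq_sub_of_hasDerivAt
    (fun r _ => hasDerivAt_exp_smul_sub_one_mulVec_inv hB v r) (hcont.intervalIntegrable 0 t)]
  simp

theorem hasDerivAt_exp_smul_sub_smul_sub_one_mulVec_inv_sq {B : Matrix n n ℝ} (hB : IsUnit B)
    (v : n → ℝ) (r : ℝ) :
    HasDerivAt (fun r : ℝ => (NormedSpace.exp (r • B) - r • B - 1) *ᵥ (B⁻¹ ^ 2 *ᵥ v))
      ((NormedSpace.exp (r • B) - 1) *ᵥ (B⁻¹ *ᵥ v)) r := by
  have h := (((hasDerivAt_exp_smul_const B r).sub ((hasDerivAt_id r).smul_const B)).sub_const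
    1).mulVec_const (B⁻¹ ^ 2 *ᵥ v)
  refine h.congr_deriv ?_
  rw [one_smul, ← sub_one_mul, mulVec_mulVec, mulVec_mulVec, sq, mul_assoc, ← mul_assoc B,
    mul_nonsing_inv B ((isUnit_iff_isUnit_det B).mp hB), one_mul]
  rfl -- the two sides use the normed-ring and the plain `Matrix` multiplication instances

end

theorem Lam_eq {B : Matrix (Fin 2) (Fin 2) ℝ} (hB : IsUnit B) (t : ℝ) (v : Fin 2 → ℝ) :
    Lam B t v = (NormedSpace.exp (t • B) - 1) *ᵥ (B⁻¹ *ᵥ v) :=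
  integral_exp_smul_mulVec hB v t

theorem Lam_add_s18 {B : Matrix (Fin 2) (Fin 2) ℝ} (hB : IsUnit B) (t r : ℝ) (v : Fin 2 → ℝ) :
    Lam B (t + r) v = NormedSpace.exp (t • B) *ᵥ Lam B r v + Lam B t v := by
  have hexp : NormedSpace.exp ((t + r) • B) = NormedSpace.exp (t • B) * NormedSpace.exp (r • B) :=
    add_smul t r B ▸ exp_add_of_commute _ _ (((Commute.refl B).smul_left t).smul_right r)
  simp only [Lam_eq hB, mulVec_mulVec, ← add_mulVec, hexp]
  noncomm_ring

/-- The curve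
`c(s) = (1/(uα)) e^{t₀θ}(e^{uαsθ} − uαsθ − I)θ⁻²ξ + s Λ^θ_{t₀} ξ + v₀`
satisfies `c(0) = v₀` and `c'(s) = Λ^θ_{t₀ + uαs} ξ`; i.e. it is the second component of
the solution of the nilrank-zero system `ṫ = uα, v̇ = Λ^θ_t ξ` with constant control `u`
starting at `(t₀, v₀)`. -/
theorem solution_nilrank_zero (θ : Matrix (Fin 2) (Fin 2) ℝ) (hθ : IsUnit θ)
    (ξ v₀ : Fin 2 → ℝ) (t₀ u α : ℝ) (huα : u * α ≠ 0)
    (c : ℝ → Fin 2 → ℝ)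
    (hc : ∀ s : ℝ, c s =
      (1 / (u * α)) • ((NormedSpace.exp (t₀ • θ)) *ᵥ
        ((NormedSpace.exp ((u * α * s) • θ) - (u * α * s) • θ - 1) *ᵥ ((θ⁻¹ ^ 2) *ᵥ ξ)))
      + s • Lam θ t₀ ξ + v₀) :
    c 0 = v₀ ∧ ∀ s : ℝ, HasDerivAt c (Lam θ (t₀ + u * α * s) ξ) s := by
  refine ⟨by simp [hc], fun s => ?_⟩
  have hinner := (hasDerivAt_exp_smul_sub_smul_sub_one_mulVec_inv_sq hθ ξ (u * α * s)).scomp s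
    ((hasDerivAt_id s).const_mul (u * α))
  have h := (((hinner.const_mulVec (NormedSpace.exp (t₀ • θ))).const_smul (1 / (u * α))).add
    ((hasDerivAt_id s).smul_const (Lam θ t₀ ξ))).add_const v₀
  rw [funext hc]
  refine h.congr_deriv ?_
  rw [← Lam_eq hθ, Lam_add_s18 hθ, mul_one, mulVec_smul, smul_smul, one_div_mul_cancel huα, one_smul,
    one_smul]
end

section
/- Let γ > 0, ρ > 0 and let k ≥ 1 be an integer. Then there exists s ∈ (2kπ/ρ, (2k+1)π/ρ) such that e^{γρs}(γ sin(ρs) − cos(ρs)) + 1 = 0. -/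
open Real

/-!
After the substitution `t = ρ s` the function is `H₂ γ t = e^{γt}(γ sin t − cos t) + 1`.
At `t = 2kπ` it equals `1 − e^{2kγπ} < 0`, and at
`t = (2k+1)π` it equals `e^{(2k+1)γπ} + 1 > 0`; the intermediate value theorem gives the zero.
-/

namespace NilrankZero

noncomputable def H₂ (γ t : ℝ) : ℝ := exp (γ * t) * (γ * sin t - cos t) + 1

variable (γ : ℝ)

theorem continuous_H₂ : Continuous (H₂ γ) := by
  unfold H₂
  fun_prop

theorem H₂_two_mul_nat_mul_pi (k : ℕ) : H₂ γ (2 * k * π) = 1 - exp (γ * (2 * k * π)) := by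
  have hsin : sin (2 * k * π) = 0 := by
    simpa using sin_nat_mul_pi (2 * k)
  have hcos : cos (2 * k * π) = 1 := by
    rw [show 2 * (k : ℝ) * π = k * (2 * π) by ring, cos_nat_mul_two_pi]
  rw [H₂, hsin, hcos]
  ring

theorem H₂_two_mul_nat_add_one_mul_pi (k : ℕ) :
    H₂ γ ((2 * k + 1) * π) = exp (γ * ((2 * k + 1) * π)) + 1 := by
  have hsin : sin ((2 * k + 1) * π) = 0 := by
    simpa using sin_nat_mul_pi (2 * k + 1)
  have hcos : cos ((2 * k + 1) * π) = -1 := by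
    rw [show (2 * (k : ℝ) + 1) * π = k * (2 * π) + π by ring, cos_nat_mul_two_pi_add_pi]
  rw [H₂, hsin, hcos]
  ring

theorem H₂_two_mul_nat_mul_pi_neg {γ : ℝ} (hγ : 0 < γ) {k : ℕ} (hk : 1 ≤ k) :
    H₂ γ (2 * k * π) < 0 := by
  have hk' : (1 : ℝ) ≤ k := by exact_mod_cast hk
  have hexp : 1 < exp (γ * (2 * k * π)) := one_lt_exp_iff.mpr (by positivity)
  rw [H₂_two_mul_nat_mul_pi]
  linarith

theorem H₂_two_mul_nat_add_one_mul_pi_pos (k : ℕ) : 0 < H₂ γ ((2 * k + 1) * π) := by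
  rw [H₂_two_mul_nat_add_one_mul_pi]
  positivity

theorem exists_H₂_eq_zero_mem_Ioo {γ : ℝ} (hγ : 0 < γ) {k : ℕ} (hk : 1 ≤ k) :
    ∃ t ∈ Set.Ioo (2 * k * π) ((2 * k + 1) * π), H₂ γ t = 0 := by
  have hle : 2 * k * π ≤ (2 * k + 1) * π := by nlinarith [pi_pos]
  exact intermediate_value_Ioo hle (continuous_H₂ γ).continuousOn
    ⟨H₂_two_mul_nat_mul_pi_neg hγ hk, H₂_two_mul_nat_add_one_mul_pi_pos γ k⟩

end NilrankZero

/-- For `γ > 0`, `ρ > 0` and an integer `k ≥ 1`, the function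
`s ↦ e^{γρs}(γ sin(ρs) − cos(ρs)) + 1` has a zero in the interval
`(2kπ/ρ, (2k+1)π/ρ)`. -/
theorem exists_zero_H2 (γ ρ : ℝ) (hγ : 0 < γ) (hρ : 0 < ρ) (k : ℕ) (hk : 1 ≤ k) :
    ∃ s ∈ Set.Ioo (2 * k * π / ρ) ((2 * k + 1) * π / ρ),
      Real.exp (γ * ρ * s) * (γ * Real.sin (ρ * s) - Real.cos (ρ * s)) + 1 = 0 := by
  obtain ⟨t, ⟨hlo, hhi⟩, ht⟩ := NilrankZero.exists_H₂_eq_zero_mem_Ioo hγ hk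
  have hρt : ρ * (t / ρ) = t := mul_div_cancel₀ t hρ.ne'
  refine ⟨t / ρ, ⟨div_lt_div_of_pos_right hlo hρ, div_lt_div_of_pos_right hhi hρ⟩, ?_⟩
  rw [mul_assoc, hρt]
  exact ht
end
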